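/- With h(k,ℓ) = f(k)P(X_ℓ = k) - P(X_ℓ ≥ k+1) as above, and assuming 0 < f(k) ≤ k+1 for all k, we have h(k,ℓ) ≥ 0 for all k ∈ ℕ₀ and ℓ ≥ 1. -/

import Mathlib

/-!
The tail `T n k = P(X_n ≥ k+1)` loses the fraction `1/(n+1)` of its mass to state `0` and
gains the flow `f k P(X_n = k)/(n+1)` out of state `k`: `(n+1) T (n+1) k = n T n k + f k p n k`.
Together with the transition rule for `p (n+1) (k+1)` this gives
`(n+1) h(k+1,n+1) = (n - f(k+1)) h(k+1,n) + f(k+1) h(k,n)` and, using total mass one,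
`(n+1) h(0,n+1) = (n - f 0) h(0,n)`. Both coefficients are nonnegative whenever `h(k,n) ≠ 0`,
because `h(k,n) = 0` for `k ≥ n` and `f k ≤ k+1 ≤ n` otherwise; induction on `ℓ` concludes.
-/

open Finset

/-- `ChainLaw f p` says that `p ℓ k = P(X_ℓ = k)` is the law of the Markov chain
`(X_ℓ)_{ℓ ≥ 1}` with `X_1 = 0` and time-inhomogeneous transitions: from state
`i` at time `n`, move to `i+1` with probability `f i/(n+1)`, return to `0` with
probability `1/(n+1)` if `i ≥ 1` (so that it stays at `i` with probability
`(n - f i)/(n+1)`), and, from `i = 0`, move to `1` with probability `f 0/(n+1)`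
and stay at `0` otherwise.  (The chain has total mass one, so the probability
of being at `0` at time `n+1` is
`p n 0 (n+1-f 0)/(n+1) + (∑_{i ≥ 1} p n i)/(n+1) = p n 0 (n+1-f 0)/(n+1) + (1 - p n 0)/(n+1)`.) -/
def ChainLaw (f : ℕ → ℝ) (p : ℕ → ℕ → ℝ) : Prop :=
  (∀ k, p 1 k = if k = 0 then 1 else 0) ∧
  (∀ n, 1 ≤ n →
    p (n + 1) 0 = p n 0 * (((n : ℝ) + 1 - f 0) / ((n : ℝ) + 1))
      + (1 - p n 0) * (1 / ((n : ℝ) + 1))) ∧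
  (∀ n, 1 ≤ n → ∀ j, 1 ≤ j →
    p (n + 1) j = p n (j - 1) * (f (j - 1) / ((n : ℝ) + 1))
      + p n j * (((n : ℝ) - f j) / ((n : ℝ) + 1)))

/-- `Hk f p k ℓ = f k P(X_ℓ = k) - P(X_ℓ ≥ k+1)`; since `X_ℓ ≤ ℓ - 1` a.s.,
`P(X_ℓ ≥ k+1) = ∑_{j=k+1}^{ℓ-1} p ℓ j`. -/
def Hk (f : ℕ → ℝ) (p : ℕ → ℕ → ℝ) (k ℓ : ℕ) : ℝ :=
  f k * p ℓ k - ∑ j ∈ Finset.Ico (k + 1) ℓ, p ℓ j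

namespace ChainLaw

variable {f : ℕ → ℝ} {p : ℕ → ℕ → ℝ}

theorem eq_zero_of_le (hp : ChainLaw f p) {n k : ℕ} (hn : 1 ≤ n) (hk : n ≤ k) : p n k = 0 := by
  induction n, hn using Nat.le_induction generalizing k with
  | base => rw [hp.1 k, if_neg (by omega)]
  | succ n hn ih =>
    rw [hp.2.2 n hn k (by omega), ih (by omega), ih (by omega)]
    ring

theorem transition_mul (hp : ChainLaw f p) {n j : ℕ} (hn : 1 ≤ n) (hj : 1 ≤ j) :
    ((n : ℝ) + 1) * p (n + 1) j = p n (j - 1) * f (j - 1) + p n j * ((n : ℝ) - f j) := by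
  rw [hp.2.2 n hn j hj]
  field_simp

theorem sum_Ico_eq_add_sum_Ico_succ (hp : ChainLaw f p) {n : ℕ} (hn : 1 ≤ n) (k : ℕ)
    (g : ℕ → ℝ) :
    ∑ j ∈ Ico k n, p n j * g j = p n k * g k + ∑ j ∈ Ico (k + 1) n, p n j * g j := by
  rcases lt_or_ge k n with hkn | hkn
  · exact sum_eq_sum_Ico_succ_bot hkn _
  · rw [Ico_eq_empty (by omega), Ico_eq_empty (by omega), hp.eq_zero_of_le hn hkn]
    simp

theorem tail_succ (hp : ChainLaw f p) {n : ℕ} (hn : 1 ≤ n) (k : ℕ) :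
    ((n : ℝ) + 1) * ∑ j ∈ Ico (k + 1) (n + 1), p (n + 1) j
      = f k * p n k + n * ∑ j ∈ Ico (k + 1) n, p n j := by
  have hsplit : ((n : ℝ) + 1) * ∑ j ∈ Ico (k + 1) (n + 1), p (n + 1) j
      = ∑ j ∈ Ico k n, p n j * f j
        + ∑ j ∈ Ico (k + 1) (n + 1), p n j * ((n : ℝ) - f j) := by
    rw [mul_sum, sum_congr rfl fun j hj => hp.transition_mul hn (by simp at hj; omega),
      sum_add_distrib]
    congr 1
    exact sum_Ico_add_right_sub_eq (f := fun j => p n j * f j) k n 1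
  have hdrop_top : ∑ j ∈ Ico (k + 1) (n + 1), p n j * ((n : ℝ) - f j)
      = ∑ j ∈ Ico (k + 1) n, p n j * ((n : ℝ) - f j) :=
    (sum_subset (Ico_subset_Ico_right n.le_succ) fun j hj hj' => by
      rw [hp.eq_zero_of_le hn (by simp at hj hj'; omega), zero_mul]).symm
  have hexpand : ∑ j ∈ Ico (k + 1) n, p n j * ((n : ℝ) - f j)
      = n * ∑ j ∈ Ico (k + 1) n, p n j - ∑ j ∈ Ico (k + 1) n, p n j * f j := by
    rw [mul_sum, ← sum_sub_distrib]
    exact sum_congr rfl fun j _ => by ring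
  rw [hsplit, hdrop_top, hexpand, hp.sum_Ico_eq_add_sum_Ico_succ hn k f]
  ring

theorem total_mass (hp : ChainLaw f p) {n : ℕ} (hn : 1 ≤ n) :
    p n 0 + ∑ j ∈ Ico 1 n, p n j = 1 := by
  induction n, hn using Nat.le_induction with
  | base => simp [hp.1]
  | succ n hn ih =>
    have htail := hp.tail_succ hn 0
    rw [hp.2.1 n hn]
    field_simp
    linear_combination htail + (n : ℝ) * ih

theorem Hk_zero_succ (hp : ChainLaw f p) {n : ℕ} (hn : 1 ≤ n) :
    Hk f p 0 (n + 1) = ((n : ℝ) - f 0) / ((n : ℝ) + 1) * Hk f p 0 n := by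
  have htail := hp.tail_succ hn 0
  have hmass := hp.total_mass hn
  rw [zero_add] at htail
  unfold Hk
  rw [hp.2.1 n hn]
  field_simp
  linear_combination -htail - f 0 * hmass

theorem Hk_succ_succ (hp : ChainLaw f p) {n : ℕ} (hn : 1 ≤ n) (k : ℕ) :
    Hk f p (k + 1) (n + 1)
      = ((n : ℝ) - f (k + 1)) / ((n : ℝ) + 1) * Hk f p (k + 1) n
        + f (k + 1) / ((n : ℝ) + 1) * Hk f p k n := by
  have htail := hp.tail_succ hn (k + 1)
  have hstep := hp.transition_mul hn (j := k + 1) (by omega)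
  have hpeel := hp.sum_Ico_eq_add_sum_Ico_succ hn (k + 1) fun _ => 1
  simp only [mul_one, Nat.add_sub_cancel] at hpeel hstep
  unfold Hk
  field_simp
  linear_combination -htail + f (k + 1) * hstep + f (k + 1) * hpeel

theorem Hk_eq_zero_of_le (hp : ChainLaw f p) {k ℓ : ℕ} (hℓ : 1 ≤ ℓ) (hk : ℓ ≤ k) :
    Hk f p k ℓ = 0 := by
  rw [Hk, hp.eq_zero_of_le hℓ hk, Ico_eq_empty (by omega)]
  simp

theorem Hk_one_nonneg (hp : ChainLaw f p) (hf : ∀ k, 0 ≤ f k) (k : ℕ) : 0 ≤ Hk f p k 1 := by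
  rw [Hk, hp.1 k, Ico_eq_empty (by omega), sum_empty, sub_zero]
  split_ifs
  · simpa using hf k
  · simp

theorem Hk_succ_nonneg (hp : ChainLaw f p) (hf : ∀ k, 0 ≤ f k)
    (hfle : ∀ k, f k ≤ (k : ℝ) + 1) {n : ℕ} (hn : 1 ≤ n) (ih : ∀ k, 0 ≤ Hk f p k n) (k : ℕ) :
    0 ≤ Hk f p k (n + 1) := by
  have hn' : (1 : ℝ) ≤ n := by exact_mod_cast hn
  cases k with
  | zero =>
    have hf0 : f 0 ≤ 1 := by simpa using hfle 0
    rw [hp.Hk_zero_succ hn]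
    exact mul_nonneg (div_nonneg (by linarith) (by positivity)) (ih 0)
  | succ k =>
    rw [hp.Hk_succ_succ hn k]
    refine add_nonneg ?_ (mul_nonneg (div_nonneg (hf _) (by positivity)) (ih k))
    rcases lt_or_ge (k + 1) n with hkn | hkn
    · have hfk : f (k + 1) ≤ n := by
        have : ((k + 1 : ℕ) : ℝ) + 1 ≤ n := by exact_mod_cast hkn
        linarith [hfle (k + 1)]
      exact mul_nonneg (div_nonneg (by linarith) (by positivity)) (ih (k + 1))
    · rw [hp.Hk_eq_zero_of_le hn hkn, mul_zero]

end ChainLaw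

/-- `h(k,ℓ) ≥ 0` for all `k ∈ ℕ` and `ℓ ≥ 1`. -/
theorem Hk_nonneg (f : ℕ → ℝ) (hfpos : ∀ k, 0 < f k)
    (hfle : ∀ k, f k ≤ (k : ℝ) + 1) (p : ℕ → ℕ → ℝ) (hp : ChainLaw f p) :
    ∀ k ℓ, 1 ≤ ℓ → 0 ≤ Hk f p k ℓ := by
  have hf k : 0 ≤ f k := (hfpos k).le
  intro k ℓ hℓ
  induction ℓ, hℓ using Nat.le_induction generalizing k with
  | base => exact hp.Hk_one_nonneg hf k
  | succ n hn ih => exact hp.Hk_succ_nonneg hf hfle hn ih k
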